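/- arXiv:1601.03773 — 2 statements merged into one kernel-verified Lean document; each statement's English description precedes it below -/
import Mathlib

section
/- Let y : [0,1] → ℝ be continuous, let a : [0,1] → [0,∞) be continuous with α = ∫₀¹ a(t) dt satisfying 0 < α < 1. Then the function u : [0,1] → ℝ defined by u(t) = ∫₀¹ ( G(t,s) + (1/(1-α)) ∫₀¹ a(τ) G(τ,s) dτ ) y(s) ds is four times continuously differentiable and satisfies u''''(t) + y(t) = 0 for all t ∈ (0,1), u'(0) = u'(1) = u''(0) = 0, and u(0) = ∫₀¹ a(s) u(s) ds. -/
/-!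
For `t ∈ [0, 1]` the Green's function splits `∫₀¹ G(t,s) y(s) ds` into the cubic
`t³/6 · ∫₀¹ (1-s)² y(s) ds` minus `∫₀ᵗ (t-s)³/6 · y(s) ds`, the fourfold primitive of `y` vanishing
to third order at `0`. So on `[0, 1]`, `u` is that function plus the constant
`c = (1-α)⁻¹ ∫₀¹ K y` with `K(s) = ∫₀¹ a(τ) G(τ,s) dτ`: this gives `u'''' = -y`, the three boundary
conditions on derivatives, and `u(0) = c`. Integrating against `a` and swapping the integrals gives
`∫₀¹ a u = ∫₀¹ K y + α c = (1-α) c + α c = c`.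
-/

open MeasureTheory intervalIntegral Set

/-- The Green's function of the fourth-order problem. -/
noncomputable def G (t s : ℝ) : ℝ :=
  if s ≤ t then (t ^ 3 * (1 - s) ^ 2 - (t - s) ^ 3) / 6
  else t ^ 3 * (1 - s) ^ 2 / 6

theorem ContinuousOn.exists_continuous_eqOn_Icc {α β : Type*} [LinearOrder α] [TopologicalSpace α]
    [OrderTopology α] [TopologicalSpace β] {f : α → β} {a b : α} (hab : a ≤ b)
    (hf : ContinuousOn f (Icc a b)) : ∃ g : α → β, Continuous g ∧ EqOn g f (Icc a b) :=
  ⟨IccExtend hab ((Icc a b).domRestrict f),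
    (continuousOn_iff_continuous_domRestrict.1 hf).Icc_extend',
    fun _ hx => IccExtend_of_mem hab _ hx⟩

theorem ContDiff.of_hasDerivAt {𝕜 F : Type*} [NontriviallyNormedField 𝕜] [NormedAddCommGroup F]
    [NormedSpace 𝕜 F] {f f' : 𝕜 → F} {n : ℕ} (hf : ∀ x, HasDerivAt f (f' x) x)
    (hf' : ContDiff 𝕜 n f') : ContDiff 𝕜 (n + 1 : ℕ) f := by
  have hderiv : deriv f = f' := funext fun x => (hf x).deriv
  rw [Nat.cast_add_one, contDiff_succ_iff_deriv, hderiv]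
  exact ⟨fun x => (hf x).differentiableAt, by simp, hf'⟩

theorem iteratedDerivWithin_eq_iteratedDeriv_of_eqOn {𝕜 F : Type*} [NontriviallyNormedField 𝕜]
    [NormedAddCommGroup F] [NormedSpace 𝕜 F] {f g : 𝕜 → F} {s : Set 𝕜} {x : 𝕜} {n : ℕ}
    (hs : UniqueDiffOn 𝕜 s) (hfg : EqOn f g s) (hg : ContDiffAt 𝕜 n g x) (hx : x ∈ s) :
    iteratedDerivWithin n f s x = iteratedDeriv n g x :=
  (iteratedDerivWithin_congr hfg hx).trans (iteratedDerivWithin_eq_iteratedDeriv hs hg hx)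

theorem continuous_uncurry_G : Continuous (Function.uncurry G) := by
  refine Continuous.if_le (by fun_prop) (by fun_prop) continuous_snd continuous_fst ?_
  intro p hp
  rw [hp]
  ring

theorem integral_mul_integral_kernel_swap {f g : ℝ → ℝ} {k : ℝ → ℝ → ℝ} (hf : Continuous f)
    (hg : Continuous g) (hk : Continuous (Function.uncurry k)) (a b c d : ℝ) :
    ∫ τ in a..b, f τ * ∫ σ in c..d, k τ σ * g σ =
      ∫ σ in c..d, (∫ τ in a..b, f τ * k τ σ) * g σ := by
  simp_rw [← intervalIntegral.integral_const_mul, ← intervalIntegral.integral_mul_const, mul_assoc]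
  refine intervalIntegral_intervalIntegral_swap ?_
  have hcont : Continuous fun p : ℝ × ℝ => f p.1 * (k p.1 p.2 * g p.2) :=
    (hf.comp continuous_fst).mul (hk.mul (hg.comp continuous_snd))
  exact (hcont.continuousOn.integrableOn_compact (isCompact_uIcc.prod isCompact_uIcc)).mono_set
    (prod_mono uIoc_subset_uIcc uIoc_subset_uIcc)

section Moments

variable {g : ℝ → ℝ}

noncomputable def moment (g : ℝ → ℝ) (k : ℕ) (t : ℝ) : ℝ := ∫ s in (0 : ℝ)..t, s ^ k * g s

theorem hasDerivAt_moment (hg : Continuous g) (k : ℕ) (t : ℝ) :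
    HasDerivAt (moment g k) (t ^ k * g t) t :=
  (((continuous_pow k).mul hg).integral_hasStrictDerivAt 0 t).hasDerivAt

@[simp]
theorem moment_zero (k : ℕ) : moment g k 0 = 0 := integral_same

theorem integral_cubic_mul (hg : Continuous g) (c₀ c₁ c₂ c₃ t : ℝ) :
    ∫ s in (0 : ℝ)..t, (c₀ + c₁ * s + c₂ * s ^ 2 + c₃ * s ^ 3) * g s =
      c₀ * moment g 0 t + c₁ * moment g 1 t + c₂ * moment g 2 t + c₃ * moment g 3 t := by
  have hint (c : ℝ) (k : ℕ) : IntervalIntegrable (fun s => c * (s ^ k * g s)) volume 0 t :=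
    (((continuous_pow k).mul hg).intervalIntegrable 0 t).const_mul c
  have hsplit : (fun s => (c₀ + c₁ * s + c₂ * s ^ 2 + c₃ * s ^ 3) * g s) = fun s =>
      c₀ * (s ^ 0 * g s) + c₁ * (s ^ 1 * g s) + c₂ * (s ^ 2 * g s) + c₃ * (s ^ 3 * g s) := by
    funext s
    ring
  rw [hsplit, integral_add (((hint _ 0).add (hint _ 1)).add (hint _ 2)) (hint _ 3),
    integral_add ((hint _ 0).add (hint _ 1)) (hint _ 2), integral_add (hint _ 0) (hint _ 1)]
  simp only [intervalIntegral.integral_const_mul, moment]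

theorem integral_one_sub_sq_mul (hg : Continuous g) :
    ∫ s in (0 : ℝ)..1, (1 - s) ^ 2 * g s = moment g 0 1 - 2 * moment g 1 1 + moment g 2 1 := by
  rw [integral_congr (g := fun s => (1 + (-2) * s + 1 * s ^ 2 + 0 * s ^ 3) * g s)
    fun s _ => by ring, integral_cubic_mul hg]
  ring

theorem integral_cauchy_kernel_mul (hg : Continuous g) (t : ℝ) :
    ∫ s in (0 : ℝ)..t, (t - s) ^ 3 / 6 * g s =
      (t ^ 3 * moment g 0 t - 3 * t ^ 2 * moment g 1 t + 3 * t * moment g 2 t -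
        moment g 3 t) / 6 := by
  rw [integral_congr
    (g := fun s => (t ^ 3 / 6 + (-t ^ 2 / 2) * s + t / 2 * s ^ 2 + (-1 / 6) * s ^ 3) * g s)
    fun s _ => by ring, integral_cubic_mul hg]
  ring

end Moments

section GreenSolution

variable {g : ℝ → ℝ}

-- `A t³/6 + c - ∫₀ᵗ (t-s)³/6 g(s) ds`, with the kernel expanded into moments of `g` so that all
-- four derivatives follow from the product rule and the fundamental theorem of calculus.
noncomputable def greenSol (g : ℝ → ℝ) (A c t : ℝ) : ℝ :=
  A * t ^ 3 / 6 + c -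
    (t ^ 3 * moment g 0 t - 3 * t ^ 2 * moment g 1 t + 3 * t * moment g 2 t - moment g 3 t) / 6

noncomputable def greenSolDeriv₁ (g : ℝ → ℝ) (A t : ℝ) : ℝ :=
  A * t ^ 2 / 2 - (t ^ 2 * moment g 0 t - 2 * t * moment g 1 t + moment g 2 t) / 2

noncomputable def greenSolDeriv₂ (g : ℝ → ℝ) (A t : ℝ) : ℝ :=
  A * t - (t * moment g 0 t - moment g 1 t)

noncomputable def greenSolDeriv₃ (g : ℝ → ℝ) (A t : ℝ) : ℝ := A - moment g 0 t

theorem hasDerivAt_greenSol (hg : Continuous g) (A c t : ℝ) :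
    HasDerivAt (greenSol g A c) (greenSolDeriv₁ g A t) t := by
  have h := ((((hasDerivAt_pow 3 t).const_mul A).div_const 6).add_const c).sub
    ((((((hasDerivAt_pow 3 t).mul (hasDerivAt_moment hg 0 t)).sub
      (((hasDerivAt_pow 2 t).const_mul 3).mul (hasDerivAt_moment hg 1 t))).add
      (((hasDerivAt_id t).const_mul 3).mul (hasDerivAt_moment hg 2 t))).sub
      (hasDerivAt_moment hg 3 t)).div_const 6)
  refine h.congr_deriv ?_
  simp only [greenSolDeriv₁, id]
  ring

theorem hasDerivAt_greenSolDeriv₁ (hg : Continuous g) (A t : ℝ) :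
    HasDerivAt (greenSolDeriv₁ g A) (greenSolDeriv₂ g A t) t := by
  have h := (((hasDerivAt_pow 2 t).const_mul A).div_const 2).sub
    (((((hasDerivAt_pow 2 t).mul (hasDerivAt_moment hg 0 t)).sub
      (((hasDerivAt_id t).const_mul 2).mul (hasDerivAt_moment hg 1 t))).add
      (hasDerivAt_moment hg 2 t)).div_const 2)
  refine h.congr_deriv ?_
  simp only [greenSolDeriv₂, id]
  ring

theorem hasDerivAt_greenSolDeriv₂ (hg : Continuous g) (A t : ℝ) :
    HasDerivAt (greenSolDeriv₂ g A) (greenSolDeriv₃ g A t) t := by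
  have h := ((hasDerivAt_id t).const_mul A).sub
    (((hasDerivAt_id t).mul (hasDerivAt_moment hg 0 t)).sub (hasDerivAt_moment hg 1 t))
  refine h.congr_deriv ?_
  simp only [greenSolDeriv₃, id]
  ring

theorem hasDerivAt_greenSolDeriv₃ (hg : Continuous g) (A t : ℝ) :
    HasDerivAt (greenSolDeriv₃ g A) (-g t) t := by
  refine ((hasDerivAt_const t A).sub (hasDerivAt_moment hg 0 t)).congr_deriv ?_
  ring

theorem contDiff_greenSol (hg : Continuous g) (A c : ℝ) : ContDiff ℝ 4 (greenSol g A c) :=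
  ((((contDiff_zero.2 hg.neg).of_hasDerivAt (hasDerivAt_greenSolDeriv₃ hg A)).of_hasDerivAt
    (hasDerivAt_greenSolDeriv₂ hg A)).of_hasDerivAt (hasDerivAt_greenSolDeriv₁ hg A)).of_hasDerivAt
    (hasDerivAt_greenSol hg A c)

theorem iteratedDeriv_greenSol (hg : Continuous g) (A c : ℝ) :
    iteratedDeriv 1 (greenSol g A c) = greenSolDeriv₁ g A ∧
    iteratedDeriv 2 (greenSol g A c) = greenSolDeriv₂ g A ∧
    iteratedDeriv 4 (greenSol g A c) = fun t => -g t := by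
  have h₀ : deriv (greenSol g A c) = greenSolDeriv₁ g A :=
    funext fun t => (hasDerivAt_greenSol hg A c t).deriv
  have h₁ : deriv (greenSolDeriv₁ g A) = greenSolDeriv₂ g A :=
    funext fun t => (hasDerivAt_greenSolDeriv₁ hg A t).deriv
  have h₂ : deriv (greenSolDeriv₂ g A) = greenSolDeriv₃ g A :=
    funext fun t => (hasDerivAt_greenSolDeriv₂ hg A t).deriv
  have h₃ : deriv (greenSolDeriv₃ g A) = fun t => -g t :=
    funext fun t => (hasDerivAt_greenSolDeriv₃ hg A t).deriv
  simp only [iteratedDeriv_succ', iteratedDeriv_zero, h₀, h₁, h₂, h₃, and_self]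

theorem integral_G_mul (hg : Continuous g) {t : ℝ} (ht : t ∈ Icc (0 : ℝ) 1) :
    ∫ s in (0 : ℝ)..1, G t s * g s = greenSol g (∫ s in (0 : ℝ)..1, (1 - s) ^ 2 * g s) 0 t := by
  have hGg : Continuous fun s => G t s * g s :=
    (continuous_uncurry_G.comp (Continuous.prodMk_right t)).mul hg
  have hleft : ∫ s in (0 : ℝ)..t, G t s * g s =
      ∫ s in (0 : ℝ)..t, (t ^ 3 / 6 * ((1 - s) ^ 2 * g s) - (t - s) ^ 3 / 6 * g s) := by
    refine integral_congr fun s hs => ?_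
    rw [uIcc_of_le ht.1] at hs
    simp only [G, if_pos hs.2]
    ring
  have hright : ∫ s in t..1, G t s * g s = ∫ s in t..1, t ^ 3 / 6 * ((1 - s) ^ 2 * g s) := by
    refine integral_congr fun s hs => ?_
    rw [uIcc_of_le ht.2] at hs
    simp only [G]
    split_ifs with hst
    · obtain rfl : s = t := le_antisymm hst hs.1
      ring
    · ring
  have hint {f : ℝ → ℝ} (hf : Continuous f) (a b : ℝ) : IntervalIntegrable f volume a b :=
    hf.intervalIntegrable a b
  rw [← integral_add_adjacent_intervals (hint hGg 0 t) (hint hGg t 1),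
    hleft, hright, integral_sub (hint (by fun_prop) 0 t) (hint (by fun_prop) 0 t),
    intervalIntegral.integral_const_mul, intervalIntegral.integral_const_mul,
    integral_cauchy_kernel_mul hg, greenSol,
    ← integral_add_adjacent_intervals (hint (by fun_prop) 0 t) (hint (by fun_prop) t 1)]
  ring

end GreenSolution

theorem fourthOrderBVP_of_eqOn_greenSol {y u : ℝ → ℝ} (hy : Continuous y) {c : ℝ}
    (hu : EqOn u (greenSol y (∫ s in (0 : ℝ)..1, (1 - s) ^ 2 * y s) c) (Icc 0 1)) :
    ContDiffOn ℝ 4 u (Icc 0 1) ∧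
    (∀ t ∈ Ioo (0 : ℝ) 1, iteratedDerivWithin 4 u (Icc 0 1) t + y t = 0) ∧
    derivWithin u (Icc 0 1) 0 = 0 ∧
    derivWithin u (Icc 0 1) 1 = 0 ∧
    iteratedDerivWithin 2 u (Icc 0 1) 0 = 0 ∧
    u 0 = c := by
  set A := ∫ s in (0 : ℝ)..1, (1 - s) ^ 2 * y s
  have hderiv {n : ℕ} (hn : n ≤ 4) {t : ℝ} (ht : t ∈ Icc (0 : ℝ) 1) :
      iteratedDerivWithin n u (Icc 0 1) t = iteratedDeriv n (greenSol y A c) t :=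
    iteratedDerivWithin_eq_iteratedDeriv_of_eqOn (uniqueDiffOn_Icc one_pos) hu
      ((contDiff_greenSol hy A c).contDiffAt.of_le (mod_cast hn)) ht
  have h0 : (0 : ℝ) ∈ Icc (0 : ℝ) 1 := left_mem_Icc.2 zero_le_one
  have h1 : (1 : ℝ) ∈ Icc (0 : ℝ) 1 := right_mem_Icc.2 zero_le_one
  obtain ⟨hd₁, hd₂, hd₄⟩ := iteratedDeriv_greenSol hy A c
  refine ⟨(contDiff_greenSol hy A c).contDiffOn.congr hu, fun t ht => ?_, ?_, ?_, ?_, ?_⟩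
  · rw [hderiv le_rfl (Ioo_subset_Icc_self ht), hd₄, neg_add_cancel]
  · rw [← iteratedDerivWithin_one, hderiv (by norm_num) h0, hd₁]
    simp [greenSolDeriv₁]
  · rw [← iteratedDerivWithin_one, hderiv (by norm_num) h1, hd₁, greenSolDeriv₁,
      show A = _ from integral_one_sub_sq_mul hy]
    ring
  · rw [hderiv (by norm_num) h0, hd₂]
    simp [greenSolDeriv₂]
  · simp [hu h0, greenSol]

theorem fourthOrderBVP_of_continuous {y a u : ℝ → ℝ} (hy : Continuous y) (ha : Continuous a)
    (hα : (∫ t in (0 : ℝ)..1, a t) ≠ 1)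
    (hu : ∀ t, u t = ∫ s in (0 : ℝ)..1,
      (G t s + (1 / (1 - ∫ τ in (0 : ℝ)..1, a τ)) * ∫ τ in (0 : ℝ)..1, a τ * G τ s) * y s) :
    ContDiffOn ℝ 4 u (Icc 0 1) ∧
    (∀ t ∈ Ioo (0 : ℝ) 1, iteratedDerivWithin 4 u (Icc 0 1) t + y t = 0) ∧
    derivWithin u (Icc 0 1) 0 = 0 ∧
    derivWithin u (Icc 0 1) 1 = 0 ∧
    iteratedDerivWithin 2 u (Icc 0 1) 0 = 0 ∧
    u 0 = ∫ s in (0 : ℝ)..1, a s * u s := by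
  set α := ∫ t in (0 : ℝ)..1, a t
  set c := 1 / (1 - α) * ∫ s in (0 : ℝ)..1, (∫ τ in (0 : ℝ)..1, a τ * G τ s) * y s with hc
  have hG : Continuous (Function.uncurry G) := continuous_uncurry_G
  have hu_eq (t : ℝ) : u t = (∫ s in (0 : ℝ)..1, G t s * y s) + c := by
    simp_rw [hu t, add_mul, mul_assoc]
    rw [integral_add (Continuous.intervalIntegrable (by fun_prop) 0 1)
      (Continuous.intervalIntegrable (by fun_prop) 0 1), intervalIntegral.integral_const_mul]
  have hgreen : EqOn u (greenSol y (∫ s in (0 : ℝ)..1, (1 - s) ^ 2 * y s) c) (Icc 0 1) :=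
    fun t ht => by
      rw [hu_eq, integral_G_mul hy ht, greenSol, greenSol]
      ring
  obtain ⟨hcont, hode, hd0, hd1, hdd0, hu0⟩ := fourthOrderBVP_of_eqOn_greenSol hy hgreen
  refine ⟨hcont, hode, hd0, hd1, hdd0, ?_⟩
  have hKy : ∫ s in (0 : ℝ)..1, (∫ τ in (0 : ℝ)..1, a τ * G τ s) * y s = (1 - α) * c := by
    rw [hc, ← mul_assoc, mul_one_div_cancel (sub_ne_zero.2 hα.symm), one_mul]
  have hau : ∫ s in (0 : ℝ)..1, a s * u s =
      (∫ s in (0 : ℝ)..1, a s * ∫ σ in (0 : ℝ)..1, G s σ * y σ) + α * c := by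
    simp_rw [hu_eq, mul_add]
    rw [integral_add (Continuous.intervalIntegrable (by fun_prop) 0 1)
      (Continuous.intervalIntegrable (by fun_prop) 0 1), intervalIntegral.integral_mul_const]
  rw [hau, integral_mul_integral_kernel_swap ha hy hG, hKy, hu0]
  ring

theorem stmt_1_general (y a u : ℝ → ℝ)
    (hy : ContinuousOn y (Set.Icc 0 1))
    (ha : ContinuousOn a (Set.Icc 0 1))
    (hα1 : (∫ t in (0 : ℝ)..1, a t) < 1)
    (hu : ∀ t, u t = ∫ s in (0 : ℝ)..1,
      (G t s + (1 / (1 - ∫ τ in (0 : ℝ)..1, a τ)) *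
        ∫ τ in (0 : ℝ)..1, a τ * G τ s) * y s) :
    ContDiffOn ℝ 4 u (Set.Icc 0 1) ∧
    (∀ t ∈ Set.Ioo (0 : ℝ) 1,
      iteratedDerivWithin 4 u (Set.Icc 0 1) t + y t = 0) ∧
    derivWithin u (Set.Icc 0 1) 0 = 0 ∧
    derivWithin u (Set.Icc 0 1) 1 = 0 ∧
    iteratedDerivWithin 2 u (Set.Icc 0 1) 0 = 0 ∧
    u 0 = ∫ s in (0 : ℝ)..1, a s * u s := by
  -- `u` only sees `y` and `a` on `[0, 1]`, so they may be replaced by continuous extensions.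
  obtain ⟨g, hg, hgy⟩ := hy.exists_continuous_eqOn_Icc zero_le_one
  obtain ⟨b, hb, hba⟩ := ha.exists_continuous_eqOn_Icc zero_le_one
  rw [← uIcc_of_le zero_le_one] at hgy hba
  have hαb : ∫ t in (0 : ℝ)..1, b t = ∫ t in (0 : ℝ)..1, a t := integral_congr hba
  have hub (t : ℝ) : u t = ∫ s in (0 : ℝ)..1,
      (G t s + (1 / (1 - ∫ τ in (0 : ℝ)..1, b τ)) * ∫ τ in (0 : ℝ)..1, b τ * G τ s) * g s := by
    rw [hu t, hαb]
    refine integral_congr fun s hs => ?_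
    have hK : ∫ τ in (0 : ℝ)..1, b τ * G τ s = ∫ τ in (0 : ℝ)..1, a τ * G τ s :=
      integral_congr fun τ hτ => by simp only [hba hτ]
    rw [hK, hgy hs]
  obtain ⟨hcont, hode, hd0, hd1, hdd0, hint⟩ :=
    fourthOrderBVP_of_continuous hg hb (hαb ▸ hα1.ne) hub
  refine ⟨hcont, fun t ht => ?_, hd0, hd1, hdd0, hint.trans (integral_congr fun s hs => ?_)⟩
  · rw [← hgy (Ioo_subset_Icc_self.trans Icc_subset_uIcc ht)]
    exact hode t ht
  · rw [hba hs]

theorem stmt_1 (y a u : ℝ → ℝ)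
    (hy : ContinuousOn y (Set.Icc 0 1))
    (ha : ContinuousOn a (Set.Icc 0 1))
    (ha0 : ∀ t ∈ Set.Icc (0 : ℝ) 1, 0 ≤ a t)
    (hα0 : 0 < ∫ t in (0 : ℝ)..1, a t)
    (hα1 : (∫ t in (0 : ℝ)..1, a t) < 1)
    (hu : ∀ t, u t = ∫ s in (0 : ℝ)..1,
      (G t s + (1 / (1 - ∫ τ in (0 : ℝ)..1, a τ)) *
        ∫ τ in (0 : ℝ)..1, a τ * G τ s) * y s) :
    ContDiffOn ℝ 4 u (Set.Icc 0 1) ∧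
    (∀ t ∈ Set.Ioo (0 : ℝ) 1,
      iteratedDerivWithin 4 u (Set.Icc 0 1) t + y t = 0) ∧
    derivWithin u (Set.Icc 0 1) 0 = 0 ∧
    derivWithin u (Set.Icc 0 1) 1 = 0 ∧
    iteratedDerivWithin 2 u (Set.Icc 0 1) 0 = 0 ∧
    u 0 = ∫ s in (0 : ℝ)..1, a s * u s :=
  stmt_1_general y a u hy ha hα1 hu
end

section
/- Let y : [0,1] → [0,∞) be continuous and let a : [0,1] → [0,∞) be continuous with α = ∫₀¹ a(t) dt satisfying 0 < α < 1. Then the function u(t) = ∫₀¹ ( G(t,s) + (1/(1-α)) ∫₀¹ a(τ) G(τ,s) dτ ) y(s) ds satisfies ‖u‖ ≤ (1/(6(1−α))) ∫₀¹ s (1−s)² y(s) ds, where ‖u‖ = sup_{t∈[0,1]} |u(t)|. -/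
/-- The sup norm on `[0,1]` of a function `u : ℝ → ℝ`. -/
noncomputable def supNorm (u : ℝ → ℝ) : ℝ := ⨆ t : Set.Icc (0 : ℝ) 1, |u t|

open MeasureTheory Set intervalIntegral

lemma G_cont : Continuous fun p : ℝ × ℝ => G p.1 p.2 := by
  have : (fun p : ℝ × ℝ => G p.1 p.2) = fun p : ℝ × ℝ =>
      if p.2 ≤ p.1 then (p.1 ^ 3 * (1 - p.2) ^ 2 - (p.1 - p.2) ^ 3) / 6
      else p.1 ^ 3 * (1 - p.2) ^ 2 / 6 := by
    ext p; rfl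
  rw [this]
  apply Continuous.if_le (by fun_prop) (by fun_prop) continuous_snd continuous_fst
  intro p h
  rw [h]; ring

lemma G_cont_left (t : ℝ) : Continuous fun s => G t s :=
  G_cont.comp (by fun_prop : Continuous fun s : ℝ => ((t, s) : ℝ × ℝ))

lemma G_cont_right (s : ℝ) : Continuous fun t => G t s :=
  G_cont.comp (by fun_prop : Continuous fun t : ℝ => ((t, s) : ℝ × ℝ))

lemma G_nonneg {t s : ℝ} (ht : t ∈ Set.Icc (0:ℝ) 1) (hs : s ∈ Set.Icc (0:ℝ) 1) :
    0 ≤ G t s := by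
  obtain ⟨ht0, ht1⟩ := ht
  obtain ⟨hs0, hs1⟩ := hs
  unfold G
  split_ifs with h
  · have h1 : t - s ≤ t * (1 - s) := by nlinarith
    have h2 : (t - s) ^ 3 ≤ (t * (1 - s)) ^ 3 :=
      pow_le_pow_left₀ (by linarith) h1 3
    nlinarith [mul_nonneg (pow_nonneg ht0 3) (sq_nonneg (1 - s)),
      mul_nonneg (mul_nonneg (pow_nonneg ht0 3) (sq_nonneg (1 - s))) hs0]
  · positivity

lemma G_le {t s : ℝ} (ht : t ∈ Set.Icc (0:ℝ) 1) (hs : s ∈ Set.Icc (0:ℝ) 1) :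
    G t s ≤ s * (1 - s) ^ 2 / 6 := by
  obtain ⟨ht0, ht1⟩ := ht
  obtain ⟨hs0, hs1⟩ := hs
  unfold G
  split_ifs with h
  · nlinarith [sq_nonneg (1 - s), sq_nonneg (t - s),
      mul_nonneg (sub_nonneg.2 ht1) (sub_nonneg.2 h), sq_nonneg (1 - t),
      mul_nonneg (mul_nonneg (sub_nonneg.2 ht1) (sub_nonneg.2 h)) (sq_nonneg (1 - s)),
      mul_nonneg (mul_nonneg (sub_nonneg.2 ht1) (sub_nonneg.2 h)) (sq_nonneg (t - s)),
      mul_nonneg hs0 (sq_nonneg (1 - t)), sq_nonneg (t + s),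
      mul_nonneg (mul_nonneg hs0 (sub_nonneg.2 h)) (sub_nonneg.2 ht1)]
  · push_neg at h
    have h3 : t ^ 3 ≤ s := by
      nlinarith [mul_nonneg (mul_nonneg ht0 (sub_nonneg.2 ht1)) (show (0:ℝ) ≤ 1 + t by linarith)]
    have : t ^ 3 * (1 - s) ^ 2 ≤ s * (1 - s) ^ 2 :=
      mul_le_mul_of_nonneg_right h3 (sq_nonneg _)
    linarith

theorem stmt_9 (y a u : ℝ → ℝ)
    (hy : ContinuousOn y (Set.Icc 0 1))
    (hy0 : ∀ t ∈ Set.Icc (0 : ℝ) 1, 0 ≤ y t)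
    (ha : ContinuousOn a (Set.Icc 0 1))
    (ha0 : ∀ t ∈ Set.Icc (0 : ℝ) 1, 0 ≤ a t)
    (hα0 : 0 < ∫ t in (0 : ℝ)..1, a t)
    (hα1 : (∫ t in (0 : ℝ)..1, a t) < 1)
    (hu : ∀ t, u t = ∫ s in (0 : ℝ)..1,
      (G t s + (1 / (1 - ∫ τ in (0 : ℝ)..1, a τ)) *
        ∫ τ in (0 : ℝ)..1, a τ * G τ s) * y s) :
    supNorm u ≤ (1 / (6 * (1 - ∫ t in (0 : ℝ)..1, a t))) *
      ∫ s in (0 : ℝ)..1, s * (1 - s) ^ 2 * y s := by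
  set α : ℝ := ∫ t in (0 : ℝ)..1, a t with hαdef
  have hα : 0 < 1 - α := by linarith
  have huIcc : Set.uIcc (0:ℝ) 1 = Set.Icc (0:ℝ) 1 := Set.uIcc_of_le (by norm_num)
  set c : ℝ := 1 / (1 - α) with hcdef
  have hc0 : 0 < c := by positivity
  set I : ℝ → ℝ := fun s => ∫ τ in (0 : ℝ)..1, a τ * G τ s with hIdef
  -- integrability of τ ↦ a τ * G τ s
  have hint1 : ∀ s, IntervalIntegrable (fun τ => a τ * G τ s) volume 0 1 := by
    intro s
    apply ContinuousOn.intervalIntegrable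
    rw [huIcc]
    exact ha.mul (G_cont_right s).continuousOn
  have hI0 : ∀ s ∈ Set.Icc (0:ℝ) 1, 0 ≤ I s := by
    intro s hs
    apply intervalIntegral.integral_nonneg (by norm_num)
    intro τ hτ
    exact mul_nonneg (ha0 τ hτ) (G_nonneg hτ hs)
  have hIle : ∀ s ∈ Set.Icc (0:ℝ) 1, I s ≤ α * (s * (1 - s) ^ 2 / 6) := by
    intro s hs
    have h1 : I s ≤ ∫ τ in (0:ℝ)..1, a τ * (s * (1 - s) ^ 2 / 6) := by
      apply intervalIntegral.integral_mono_on (by norm_num) (hint1 s)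
      · apply ContinuousOn.intervalIntegrable
        rw [huIcc]
        exact ha.mul continuousOn_const
      · intro τ hτ
        exact mul_le_mul_of_nonneg_left (G_le hτ hs) (ha0 τ hτ)
    rwa [intervalIntegral.integral_mul_const] at h1
  -- continuity of I via continuous extension of a
  set b : ℝ → ℝ := fun τ => a (max 0 (min 1 τ)) with hbdef
  have hbmem : ∀ x : ℝ, max 0 (min 1 x) ∈ Set.Icc (0:ℝ) 1 :=
    fun x => ⟨le_max_left _ _, max_le (by norm_num) (min_le_left _ _)⟩
  have hb : Continuous b := ha.comp_continuous (by fun_prop) hbmem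
  have hba : ∀ τ ∈ Set.Icc (0:ℝ) 1, b τ = a τ := by
    intro τ hτ
    simp only [hbdef]
    rw [min_eq_right hτ.2, max_eq_right hτ.1]
  have hIeq : ∀ s, I s = ∫ τ in Set.Icc (0:ℝ) 1, b τ * G τ s := by
    intro s
    have h1 : I s = ∫ τ in (0:ℝ)..1, b τ * G τ s := by
      apply intervalIntegral.integral_congr
      rw [huIcc]
      intro τ hτ
      simp [hba τ hτ]
    rw [h1, intervalIntegral.integral_of_le (by norm_num : (0:ℝ) ≤ 1),
      ← MeasureTheory.integral_Icc_eq_integral_Ioc]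
  have hIcont : Continuous I := by
    have hfc : Continuous (Function.uncurry fun s τ => b τ * G τ s) := by
      apply Continuous.mul
      · exact hb.comp continuous_snd
      · exact G_cont.comp (continuous_snd.prodMk continuous_fst)
    have := continuous_parametric_integral_of_continuous (μ := volume)
      (f := fun s τ => b τ * G τ s) hfc (isCompact_Icc : IsCompact (Set.Icc (0:ℝ) 1))
    simpa [← hIeq] using this
  -- pointwise bounds for the main integrand
  have hF0 : ∀ t ∈ Set.Icc (0:ℝ) 1, ∀ s ∈ Set.Icc (0:ℝ) 1,
      0 ≤ (G t s + c * I s) * y s := by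
    intro t ht s hs
    exact mul_nonneg (add_nonneg (G_nonneg ht hs) (mul_nonneg hc0.le (hI0 s hs))) (hy0 s hs)
  have hFle : ∀ t ∈ Set.Icc (0:ℝ) 1, ∀ s ∈ Set.Icc (0:ℝ) 1,
      (G t s + c * I s) * y s ≤ (1 / (6 * (1 - α))) * (s * (1 - s) ^ 2 * y s) := by
    intro t ht s hs
    have h1 : G t s + c * I s ≤ s * (1 - s) ^ 2 / 6 + c * (α * (s * (1 - s) ^ 2 / 6)) := by
      have := hIle s hs
      have := G_le (t := t) ht hs
      nlinarith [hc0]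
    have h2 : s * (1 - s) ^ 2 / 6 + c * (α * (s * (1 - s) ^ 2 / 6))
        = (1 / (6 * (1 - α))) * (s * (1 - s) ^ 2) := by
      rw [hcdef]
      field_simp
      ring
    calc (G t s + c * I s) * y s
        ≤ ((1 / (6 * (1 - α))) * (s * (1 - s) ^ 2)) * y s := by
          rw [← h2]; exact mul_le_mul_of_nonneg_right h1 (hy0 s hs)
      _ = (1 / (6 * (1 - α))) * (s * (1 - s) ^ 2 * y s) := by ring
  -- integrability of both sides
  have hFint : ∀ t, IntervalIntegrable (fun s => (G t s + c * I s) * y s) volume 0 1 := by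
    intro t
    apply ContinuousOn.intervalIntegrable
    rw [huIcc]
    exact (((G_cont_left t).continuousOn).add
      ((continuous_const.mul hIcont).continuousOn)).mul hy
  have hRint : IntervalIntegrable
      (fun s => (1 / (6 * (1 - α))) * (s * (1 - s) ^ 2 * y s)) volume 0 1 := by
    apply ContinuousOn.intervalIntegrable
    rw [huIcc]
    exact continuousOn_const.mul ((by fun_prop : ContinuousOn
      (fun s : ℝ => s * (1 - s) ^ 2) (Set.Icc 0 1)).mul hy)
  -- bound on u t
  have hub : ∀ t ∈ Set.Icc (0:ℝ) 1,
      |u t| ≤ (1 / (6 * (1 - α))) * ∫ s in (0:ℝ)..1, s * (1 - s) ^ 2 * y s := by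
    intro t ht
    have hut : u t = ∫ s in (0:ℝ)..1, (G t s + c * I s) * y s := hu t
    have h0 : 0 ≤ u t := by
      rw [hut]
      exact intervalIntegral.integral_nonneg (by norm_num) (hF0 t ht)
    have h1 : u t ≤ ∫ s in (0:ℝ)..1, (1 / (6 * (1 - α))) * (s * (1 - s) ^ 2 * y s) := by
      rw [hut]
      exact intervalIntegral.integral_mono_on (by norm_num) (hFint t) hRint (hFle t ht)
    rw [intervalIntegral.integral_const_mul] at h1
    rwa [abs_of_nonneg h0]
  -- conclude
  have hne : Nonempty (Set.Icc (0:ℝ) 1) := ⟨⟨0, by norm_num⟩⟩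
  exact ciSup_le fun t => hub t t.2
end
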